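/- arXiv:1305.1115 — 7 statements merged into one kernel-verified Lean document; each statement's English description precedes it below -/
import Mathlib

section
/- Let X be a set and suppose that for every reflexive binary relation E on X one has E^n ≤ E^{n−1} (for a fixed n ≥ 2). Then for any two equivalence relations R, S on X, the 2n−2 fold alternating composite (R,S)_{2n−2} equals (S,R)_{2n−2}, where (R,S)_m = R ∘ S ∘ R ∘ ⋯ (m alternating factors starting with R, composing left to right). -/
/-!
With `E := relComp R S`, which is reflexive when `R` and `S` are, `E^k` is the alternating
composite `(R,S)_{2k}`. Padding a chain with reflexive steps gives
`(S,R)_{2n-2} ≤ (R,S)_{2n} = E^n`, and the hypothesis collapses this to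
`E^{n-1} = (R,S)_{2n-2}`. Swapping the roles of `R` and `S` gives the other inclusion.
-/

/-- Relational composite, path order: first `R`, then `S`
(equals `S ∘ R` in the paper's notation: `(S ∘ R) x z ↔ ∃ y, R x y ∧ S y z`). -/
def relComp {X : Type*} (R S : X → X → Prop) : X → X → Prop :=
  fun x z => ∃ y, R x y ∧ S y z

/-- Alternating composite `(R,S)_m`: `m` alternating factors starting with `R`,
composing left to right. -/
def altComp {X : Type*} (R S : X → X → Prop) : ℕ → (X → X → Prop)
  | 0 => Eq
  | m + 1 => relComp R (altComp S R m)

/-- The `k`-fold composite `R^k`. -/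
def relPow {X : Type*} (R : X → X → Prop) (k : ℕ) : X → X → Prop :=
  altComp R R k

section

variable {X : Type*}

theorem relPow_relComp_iff (R S : X → X → Prop) (k : ℕ) (x y : X) :
    relPow (relComp R S) k x y ↔ altComp R S (2 * k) x y := by
  induction k generalizing x with
  | zero => rfl
  | succ k ih =>
    show relComp (relComp R S) (relPow (relComp R S) k) x y ↔
      relComp R (relComp S (altComp R S (2 * k))) x y
    constructor
    · rintro ⟨w, ⟨u, hxu, huw⟩, hwy⟩
      exact ⟨u, hxu, w, huw, (ih w).mp hwy⟩
    · rintro ⟨u, hxu, w, huw, hwy⟩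
      exact ⟨w, ⟨u, hxu, huw⟩, (ih w).mpr hwy⟩

theorem altComp_succ_of_reflexive {R S : X → X → Prop} (hR : ∀ a, R a a) (hS : ∀ a, S a a)
    {m : ℕ} {x y : X} (h : altComp R S m x y) : altComp R S (m + 1) x y := by
  induction m generalizing R S x with
  | zero => cases h; exact ⟨_, hR _, rfl⟩
  | succ m ih =>
    obtain ⟨w, hxw, hwy⟩ := h
    exact ⟨w, hxw, ih hS hR hwy⟩

theorem altComp_add_two_of_altComp_swap {R S : X → X → Prop} (hR : ∀ a, R a a)
    (hS : ∀ a, S a a) {m : ℕ} {x y : X} (h : altComp S R m x y) :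
    altComp R S (m + 2) x y :=
  altComp_succ_of_reflexive hR hS ⟨x, hR x, h⟩

theorem altComp_swap_of_relPow_relComp_succ {R S : X → X → Prop} (hR : ∀ a, R a a)
    (hS : ∀ a, S a a) {k : ℕ}
    (hE : ∀ x y, relPow (relComp R S) (k + 1) x y → relPow (relComp R S) k x y)
    {x y : X} (h : altComp S R (2 * k) x y) : altComp R S (2 * k) x y := by
  have hpow : relPow (relComp R S) (k + 1) x y :=
    (relPow_relComp_iff R S (k + 1) x y).mpr (altComp_add_two_of_altComp_swap hR hS h)
  exact (relPow_relComp_iff R S k x y).mp (hE x y hpow)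

end

theorem stmt_1 {X : Type*} (n : ℕ) (hn : 2 ≤ n)
    (h : ∀ E : X → X → Prop, (∀ x, E x x) →
      ∀ x y, relPow E n x y → relPow E (n - 1) x y)
    (R S : X → X → Prop) (hR : Equivalence R) (hS : Equivalence S) :
    ∀ x y, altComp R S (2 * n - 2) x y ↔ altComp S R (2 * n - 2) x y := by
  obtain ⟨k, rfl⟩ : ∃ k, n = k + 1 := ⟨n - 1, by omega⟩
  intro x y
  rw [show 2 * (k + 1) - 2 = 2 * k by omega]
  exact ⟨altComp_swap_of_relPow_relComp_succ hS.refl hR.refl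
      (h _ fun a => ⟨a, hS.refl a, hR.refl a⟩),
    altComp_swap_of_relPow_relComp_succ hR.refl hS.refl
      (h _ fun a => ⟨a, hR.refl a, hS.refl a⟩)⟩
end

section
/- Let X be a set equipped with ternary operations w₁, …, w_{n−1} : X³ → X satisfying w₁(x,y,y) = x, w_i(x,x,y) = w_{i+1}(x,y,y) for i = 1, …, n−2, and w_{n−1}(x,x,y) = y (Hagemann–Mitschke operations), and assume each w_i preserves two equivalence relations R and S on X in the sense that R and S are compatible with each w_i (i.e., if R a a', R b b', R c c' then R (w_i(a,b,c)) (w_i(a',b',c'))). Then (R,S)_n ≤ (S,R)_n, where (R,S)_n is the n-fold alternating composite. -/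
/-!
A chain `x = a₀ R a₁ S a₂ R ⋯ aₙ = y` is transported to the chain
`bᵢ = wᵢ(aᵢ₋₁, aᵢ, aᵢ₊₁)`, where `w₀` and `wₙ` are taken to be the middle projection,
so that `b₀ = x` and `bₙ = y`. Consecutive terms pass through the common value
`wᵢ(aᵢ, aᵢ, aᵢ₊₁) = wᵢ₊₁(aᵢ, aᵢ₊₁, aᵢ₊₁)`: `bᵢ` is linked to it through the step
`aᵢ₋₁ — aᵢ` and `bᵢ₊₁` through the step `aᵢ₊₁ — aᵢ₊₂`. Both steps have the parity
opposite to that of `aᵢ — aᵢ₊₁`, so the new chain starts with `S`.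
-/

/-- The `i`-th factor of `altComp R S`. -/
def altRel {X : Type*} (R S : X → X → Prop) : ℕ → X → X → Prop
  | 0 => R
  | i + 1 => altRel S R i

def Compatible {X : Type*} (T : X → X → Prop) (f : X → X → X → X) : Prop :=
  ∀ a a' b b' c c', T a a' → T b b' → T c c' → T (f a b c) (f a' b' c')

section Chains

variable {X : Type*}

theorem altRel_of_forall {P : (X → X → Prop) → Prop} {R S : X → X → Prop}
    (hR : P R) (hS : P S) (i : ℕ) : P (altRel R S i) := by
  induction i generalizing R S with
  | zero => exact hR
  | succ i ih => exact ih hS hR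

theorem altComp_iff_exists_chain {R S : X → X → Prop} {m : ℕ} {x y : X} :
    altComp R S m x y ↔
      ∃ a : ℕ → X, a 0 = x ∧ a m = y ∧ ∀ i < m, altRel R S i (a i) (a (i + 1)) := by
  induction m generalizing R S x with
  | zero => exact ⟨fun h => ⟨fun _ => x, rfl, h, by omega⟩, fun ⟨a, h0, hm, _⟩ => h0 ▸ hm⟩
  | succ m ih =>
    constructor
    · rintro ⟨z, hxz, hzy⟩
      obtain ⟨a, rfl, ham, ha⟩ := ih.mp hzy
      refine ⟨fun | 0 => x | i + 1 => a i, rfl, ham, ?_⟩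
      rintro (_ | i) hi
      exacts [hxz, ha i (by omega)]
    · rintro ⟨a, rfl, rfl, ha⟩
      exact ⟨a 1, ha 0 (by omega),
        ih.mpr ⟨fun i => a (i + 1), rfl, rfl, fun i hi => ha (i + 1) (by omega)⟩⟩

end Chains

section Shifting

variable {X : Type*} {R S : X → X → Prop} {n : ℕ} {W : ℕ → X → X → X → X}

theorem altRel_swap_step (hR : Equivalence R) (hS : Equivalence S)
    (hW0 : ∀ x y z, W 0 x y z = y) (hWn : ∀ x y z, W n x y z = y)
    (hstep : ∀ i < n, ∀ x y, W i x x y = W (i + 1) x y y)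
    (hRc : ∀ i ≤ n, Compatible R (W i)) (hSc : ∀ i ≤ n, Compatible S (W i))
    {a : ℕ → X} (ha : ∀ i < n, altRel R S i (a i) (a (i + 1))) {i : ℕ} (hi : i < n) :
    altRel S R i (W i (a (i - 1)) (a i) (a (i + 1)))
      (W (i + 1) (a i) (a (i + 1)) (a (i + 2))) := by
  have hT : Equivalence (altRel S R i) := altRel_of_forall hS hR i
  have hTc : ∀ j ≤ n, Compatible (altRel S R i) (W j) := fun j hj =>
    altRel_of_forall (P := fun T => Compatible T (W j)) (hSc j hj) (hRc j hj) i
  have left : altRel S R i (W i (a (i - 1)) (a i) (a (i + 1)))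
      (W i (a i) (a i) (a (i + 1))) := by
    rcases i with _ | j
    · simp only [hW0]
      exact hT.refl _
    · exact hTc (j + 1) hi.le _ _ _ _ _ _ (ha j (by omega)) (hT.refl _) (hT.refl _)
  have right : altRel S R i (W (i + 1) (a i) (a (i + 1)) (a (i + 1)))
      (W (i + 1) (a i) (a (i + 1)) (a (i + 2))) := by
    rcases (show i + 1 ≤ n from hi).eq_or_lt with hlast | hlt
    · simp only [hlast, hWn]
      exact hT.refl _
    · exact hTc (i + 1) hlt.le _ _ _ _ _ _ (hT.refl _) (hT.refl _) (ha (i + 1) hlt)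
  exact hT.trans left (hstep i hi _ _ ▸ right)

theorem altComp_swap_of_shifting_family (hR : Equivalence R) (hS : Equivalence S)
    (hW0 : ∀ x y z, W 0 x y z = y) (hWn : ∀ x y z, W n x y z = y)
    (hstep : ∀ i < n, ∀ x y, W i x x y = W (i + 1) x y y)
    (hRc : ∀ i ≤ n, Compatible R (W i)) (hSc : ∀ i ≤ n, Compatible S (W i))
    {x y : X} (h : altComp R S n x y) : altComp S R n x y := by
  obtain ⟨a, rfl, rfl, ha⟩ := altComp_iff_exists_chain.mp h
  exact altComp_iff_exists_chain.mpr ⟨fun i => W i (a (i - 1)) (a i) (a (i + 1)),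
    hW0 _ _ _, hWn _ _ _, fun i hi => altRel_swap_step hR hS hW0 hWn hstep hRc hSc ha hi⟩

end Shifting

section HagemannMitschke

variable {X : Type*} {n : ℕ} {w : ℕ → X → X → X → X}

def extendByMiddleProjection (n : ℕ) (w : ℕ → X → X → X → X) : ℕ → X → X → X → X :=
  fun i => if i = 0 ∨ i = n then fun _ y _ => y else w i

theorem extendByMiddleProjection_zero (x y z : X) :
    extendByMiddleProjection n w 0 x y z = y := by
  simp [extendByMiddleProjection]

theorem extendByMiddleProjection_self (x y z : X) :
    extendByMiddleProjection n w n x y z = y := by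
  simp [extendByMiddleProjection]

theorem extendByMiddleProjection_of_pos_of_lt {i : ℕ} (hi0 : 0 < i) (hin : i < n) :
    extendByMiddleProjection n w i = w i := by
  simp [extendByMiddleProjection, hi0.ne', hin.ne]

theorem compatible_extendByMiddleProjection {T : X → X → Prop}
    (hw : ∀ i, 1 ≤ i → i ≤ n - 1 → Compatible T (w i)) {i : ℕ} (hi : i ≤ n) :
    Compatible T (extendByMiddleProjection n w i) := by
  unfold extendByMiddleProjection
  split_ifs with hend
  · exact fun _ _ _ _ _ _ _ hb _ => hb
  · exact hw i (by omega) (by omega)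

theorem extendByMiddleProjection_step (hn : 2 ≤ n) (h1 : ∀ x y, w 1 x y y = x)
    (hmid : ∀ i, 1 ≤ i → i ≤ n - 2 → ∀ x y, w i x x y = w (i + 1) x y y)
    (hlast : ∀ x y, w (n - 1) x x y = y) {i : ℕ} (hi : i < n) (x y : X) :
    extendByMiddleProjection n w i x x y = extendByMiddleProjection n w (i + 1) x y y := by
  rcases Nat.eq_zero_or_pos i with rfl | hi0
  · rw [zero_add, extendByMiddleProjection_zero,
      extendByMiddleProjection_of_pos_of_lt one_pos hn, h1]
  rw [extendByMiddleProjection_of_pos_of_lt hi0 hi]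
  rcases (show i + 1 ≤ n from hi).eq_or_lt with hend | hlt
  · rw [hend, extendByMiddleProjection_self, show i = n - 1 by omega, hlast]
  · rw [extendByMiddleProjection_of_pos_of_lt (Nat.succ_pos i) hlt, hmid i hi0 (by omega)]

end HagemannMitschke

theorem stmt_3 {X : Type*} (n : ℕ) (hn : 2 ≤ n)
    (w : ℕ → X → X → X → X)
    (h1 : ∀ x y, w 1 x y y = x)
    (hmid : ∀ i, 1 ≤ i → i ≤ n - 2 → ∀ x y, w i x x y = w (i + 1) x y y)
    (hlast : ∀ x y, w (n - 1) x x y = y)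
    (R S : X → X → Prop) (hR : Equivalence R) (hS : Equivalence S)
    (hcompatR : ∀ i, 1 ≤ i → i ≤ n - 1 → ∀ a a' b b' c c',
      R a a' → R b b' → R c c' → R (w i a b c) (w i a' b' c'))
    (hcompatS : ∀ i, 1 ≤ i → i ≤ n - 1 → ∀ a a' b b' c c',
      S a a' → S b b' → S c c' → S (w i a b c) (w i a' b' c')) :
    ∀ x y, altComp R S n x y → altComp S R n x y :=
  fun _ _ => altComp_swap_of_shifting_family hR hS
    extendByMiddleProjection_zero extendByMiddleProjection_self
    (fun _ hi => extendByMiddleProjection_step hn h1 hmid hlast hi)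
    (fun _ => compatible_extendByMiddleProjection hcompatR)
    (fun _ => compatible_extendByMiddleProjection hcompatS)
end

section
/- Let X be a set with Hagemann–Mitschke operations w₁, …, w_{n−1} (satisfying w₁(x,y,y)=x, w_i(x,x,y)=w_{i+1}(x,y,y) for 1 ≤ i ≤ n−2, and w_{n−1}(x,x,y)=y), and let R be a reflexive binary relation on X compatible with each w_i. Then R^op ≤ R^{n−1}. -/
/-!
Given `R y x`, compatibility applied to `(x, x) (y, x) (y, y)` gives `R (w i x y y) (w i x x y)`.
By the Hagemann–Mitschke identities these steps link up into the chain
`x = w₁ x y y R w₁ x x y = w₂ x y y R ⋯ R w_{n-1} x x y = y` of length `n - 1`.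
-/

theorem relPow_of_chain {X : Type*} {R : X → X → Prop} :
    ∀ (k : ℕ) (f : ℕ → X), (∀ i < k, R (f i) (f (i + 1))) → relPow R k (f 0) (f k)
  | 0, _, _ => rfl
  | k + 1, f, hf =>
    ⟨f 1, hf 0 k.succ_pos,
      relPow_of_chain k (fun i => f (i + 1)) fun i hi => hf (i + 1) (by omega)⟩

theorem stmt_4 {X : Type*} (n : ℕ) (hn : 2 ≤ n)
    (w : ℕ → X → X → X → X)
    (h1 : ∀ x y, w 1 x y y = x)
    (hmid : ∀ i, 1 ≤ i → i ≤ n - 2 → ∀ x y, w i x x y = w (i + 1) x y y)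
    (hlast : ∀ x y, w (n - 1) x x y = y)
    (R : X → X → Prop) (hrefl : ∀ x, R x x)
    (hcompat : ∀ i, 1 ≤ i → i ≤ n - 1 → ∀ a a' b b' c c',
      R a a' → R b b' → R c c' → R (w i a b c) (w i a' b' c')) :
    ∀ x y, R y x → relPow R (n - 1) x y := by
  intro x y hyx
  have step : ∀ i, 1 ≤ i → i ≤ n - 1 → R (w i x y y) (w i x x y) := fun i hi1 hi2 =>
    hcompat i hi1 hi2 x x y x y y (hrefl x) hyx (hrefl y)
  let f : ℕ → X
    | 0 => x
    | i + 1 => w (i + 1) x x y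
  have chain : relPow R (n - 1) (f 0) (f (n - 1)) := by
    refine relPow_of_chain (n - 1) f fun i hi => ?_
    rcases i with _ | i
    · simpa only [f, h1] using step 1 le_rfl (by omega)
    · simpa only [f, hmid (i + 1) (by omega) (by omega)] using step (i + 2) (by omega) (by omega)
  obtain ⟨m, hm⟩ : ∃ m, n - 1 = m + 1 := ⟨n - 2, by omega⟩
  have chain_end : f (n - 1) = y := by
    rw [hm]
    show w (m + 1) x x y = y
    rw [← hm, hlast]
  exact chain_end ▸ chain
end

section
/- Let X be a set with Hagemann–Mitschke operations w₁, …, w_{n−1} (satisfying w₁(x,y,y)=x, w_i(x,x,y)=w_{i+1}(x,y,y) for 1 ≤ i ≤ n−2, and w_{n−1}(x,x,y)=y), and let R be a reflexive binary relation on X compatible with each w_i. Then R^n ≤ R^{n−1}. -/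
/-!
A chain `x = a₀ R a₁ R ⋯ R aₙ = y` is shortened by one link using the elements
`bᵢ = wᵢ(aᵢ, aᵢ, aᵢ₊₁)` (with `b₀ = a₀`). By the Hagemann–Mitschke identities
`bᵢ = wᵢ₊₁(aᵢ, aᵢ₊₁, aᵢ₊₁)` for `i ≤ n - 2` and `bₙ₋₁ = aₙ`, so compatibility of `R` with
`wᵢ₊₁`, applied to `aᵢ R aᵢ₊₁`, `aᵢ₊₁ R aᵢ₊₁` and `aᵢ₊₁ R aᵢ₊₂`, gives `bᵢ R bᵢ₊₁`.
-/

theorem relPow_iff_exists_chain {X : Type*} (R : X → X → Prop) (k : ℕ) (x y : X) :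
    relPow R k x y ↔ ∃ a : ℕ → X, a 0 = x ∧ a k = y ∧ ∀ i < k, R (a i) (a (i + 1)) := by
  induction k generalizing x with
  | zero => exact ⟨fun h => ⟨fun _ => x, rfl, h, by omega⟩, fun ⟨a, ha0, hak, _⟩ => ha0 ▸ hak⟩
  | succ k ih =>
    constructor
    · rintro ⟨z, hxz, hzy⟩
      obtain ⟨a, ha0, hak, ha⟩ := (ih z).1 hzy
      refine ⟨Nat.rec x fun j _ => a j, rfl, hak, ?_⟩
      rintro (_ | j) hj
      · simpa [ha0] using hxz
      · exact ha j (by omega)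
    · rintro ⟨a, rfl, rfl, ha⟩
      exact ⟨a 1, ha 0 k.succ_pos,
        (ih (a 1)).2 ⟨fun i => a (i + 1), rfl, rfl, fun i hi => ha (i + 1) (by omega)⟩⟩

def hmChain {X : Type*} (w : ℕ → X → X → X → X) (a : ℕ → X) (i : ℕ) : X :=
  if i = 0 then a 0 else w i (a i) (a i) (a (i + 1))

section HagemannMitschke

variable {X : Type*} (w : ℕ → X → X → X → X) (a : ℕ → X)

theorem hmChain_zero : hmChain w a 0 = a 0 := rfl

theorem hmChain_of_ne_zero {i : ℕ} (hi : i ≠ 0) :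
    hmChain w a i = w i (a i) (a i) (a (i + 1)) :=
  if_neg hi

theorem hmChain_eq_of_le {n : ℕ} (h1 : ∀ x y, w 1 x y y = x)
    (hmid : ∀ i, 1 ≤ i → i ≤ n - 2 → ∀ x y, w i x x y = w (i + 1) x y y)
    {i : ℕ} (hi : i ≤ n - 2) :
    hmChain w a i = w (i + 1) (a i) (a (i + 1)) (a (i + 1)) := by
  rcases Nat.eq_zero_or_pos i with rfl | hpos
  · rw [hmChain_zero, h1]
  · rw [hmChain_of_ne_zero w a hpos.ne', hmid i hpos hi]

theorem hmChain_pred {n : ℕ} (hn : 2 ≤ n) (hlast : ∀ x y, w (n - 1) x x y = y) :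
    hmChain w a (n - 1) = a n := by
  rw [hmChain_of_ne_zero w a (by omega), hlast, Nat.sub_add_cancel (by omega)]

theorem hmChain_rel {n : ℕ} (h1 : ∀ x y, w 1 x y y = x)
    (hmid : ∀ i, 1 ≤ i → i ≤ n - 2 → ∀ x y, w i x x y = w (i + 1) x y y)
    (R : X → X → Prop) (hrefl : ∀ x, R x x)
    (hcompat : ∀ i, 1 ≤ i → i ≤ n - 1 → ∀ a a' b b' c c',
      R a a' → R b b' → R c c' → R (w i a b c) (w i a' b' c'))
    (ha : ∀ i < n, R (a i) (a (i + 1))) {i : ℕ} (hi : i < n - 1) :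
    R (hmChain w a i) (hmChain w a (i + 1)) := by
  rw [hmChain_eq_of_le w a h1 hmid (by omega), hmChain_of_ne_zero w a i.succ_ne_zero]
  exact hcompat (i + 1) (by omega) (by omega) _ _ _ _ _ _
    (ha i (by omega)) (hrefl _) (ha (i + 1) (by omega))

end HagemannMitschke

theorem stmt_5 {X : Type*} (n : ℕ) (hn : 2 ≤ n)
    (w : ℕ → X → X → X → X)
    (h1 : ∀ x y, w 1 x y y = x)
    (hmid : ∀ i, 1 ≤ i → i ≤ n - 2 → ∀ x y, w i x x y = w (i + 1) x y y)
    (hlast : ∀ x y, w (n - 1) x x y = y)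
    (R : X → X → Prop) (hrefl : ∀ x, R x x)
    (hcompat : ∀ i, 1 ≤ i → i ≤ n - 1 → ∀ a a' b b' c c',
      R a a' → R b b' → R c c' → R (w i a b c) (w i a' b' c')) :
    ∀ x y, relPow R n x y → relPow R (n - 1) x y := by
  intro x y hxy
  obtain ⟨a, rfl, rfl, ha⟩ := (relPow_iff_exists_chain R n x y).1 hxy
  exact (relPow_iff_exists_chain R (n - 1) _ _).2
    ⟨hmChain w a, hmChain_zero w a, hmChain_pred w a hn hlast,
      fun i hi => hmChain_rel w a h1 hmid R hrefl hcompat ha hi⟩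
end

section
/- Given (n+1)-ary operations v₀, …, v_n on a set X satisfying v₀(x₀,…,x_n)=x₀, v_n(x₀,…,x_n)=x_n, and the identities v_{i−1}=v_i on tuples (x₀,x₀,x₂,x₂,…) for i even and v_{i−1}=v_i on tuples (x₀,x₁,x₁,x₃,x₃,…) for i odd, define ternary operations w_i(x,y,z) = v_i(x,…,x,y,z,…,z) with x repeated i times and z repeated n−i times, for 1 ≤ i ≤ n−1. Then w₁(x,y,y)=x, w_i(x,x,y)=w_{i+1}(x,y,y) for 1 ≤ i ≤ n−2, and w_{n−1}(x,x,y)=y. -/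
theorem stmt_7 {X : Type*} (n : ℕ) (hn : 2 ≤ n)
    (v : ℕ → (ℕ → X) → X)
    (hv0 : ∀ x : ℕ → X, v 0 x = x 0)
    (hveven : ∀ i, 1 ≤ i → i ≤ n → i % 2 = 0 → ∀ x : ℕ → X,
      (∀ j, 2 * j + 1 ≤ n → x (2 * j + 1) = x (2 * j)) → v (i - 1) x = v i x)
    (hvodd : ∀ i, 1 ≤ i → i ≤ n → i % 2 = 1 → ∀ x : ℕ → X,
      (∀ j, 2 * j + 2 ≤ n → x (2 * j + 2) = x (2 * j + 1)) → v (i - 1) x = v i x)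
    (hvn : ∀ x : ℕ → X, v n x = x n)
    (w : ℕ → X → X → X → X)
    (hwdef : ∀ i, 1 ≤ i → i ≤ n - 1 → ∀ x y z, w i x y z =
      v i (fun j => if j < i then x else if j = i then y else z)) :
    (∀ x y, w 1 x y y = x) ∧
    (∀ i, 1 ≤ i → i ≤ n - 2 → ∀ x y, w i x x y = w (i + 1) x y y) ∧
    (∀ x y, w (n - 1) x x y = y) := by
  refine ⟨?_, ?_, ?_⟩
  · intro x y
    rw [hwdef 1 le_rfl (by omega)]
    have h := hvodd 1 le_rfl (by omega) rfl
      (fun j => if j < 1 then x else if j = 1 then y else y)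
      (by intro j hj; split_ifs <;> first | rfl | (exfalso; omega))
    rw [← h, hv0]
    simp
  · intro i hi1 hi2 x y
    rw [hwdef i hi1 (by omega), hwdef (i + 1) (by omega) (by omega)]
    have ht : (fun j => if j < i then x else if j = i then x else y)
        = (fun j => if j < i + 1 then x else if j = i + 1 then y else y) := by
      funext j; split_ifs <;> first | rfl | (exfalso; omega)
    rw [ht]
    set t : ℕ → X := fun j => if j < i + 1 then x else if j = i + 1 then y else y with hts
    have key : v i t = v (i + 1) t := by
      rcases Nat.mod_two_eq_zero_or_one (i + 1) with h | h
      · have := hveven (i + 1) (by omega) (by omega) h t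
          (by intro j hj; simp only [hts]; split_ifs <;>
              first | rfl | (exfalso; omega))
        simpa using this
      · have := hvodd (i + 1) (by omega) (by omega) h t
          (by intro j hj; simp only [hts]; split_ifs <;>
              first | rfl | (exfalso; omega))
        simpa using this
    exact key
  · intro x y
    rw [hwdef (n - 1) (by omega) le_rfl]
    set t : ℕ → X := fun j => if j < n - 1 then x else if j = n - 1 then x else y with hts
    have key : v (n - 1) t = v n t := by
      rcases Nat.mod_two_eq_zero_or_one n with h | h
      · have := hveven n (by omega) le_rfl h t
          (by intro j hj; simp only [hts]; split_ifs <;>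
              first | rfl | (exfalso; omega))
        simpa using this
      · have := hvodd n (by omega) le_rfl h t
          (by intro j hj; simp only [hts]; split_ifs <;>
              first | rfl | (exfalso; omega))
        simpa using this
    rw [key, hvn]
    simp only [hts]
    split_ifs <;> first | rfl | (exfalso; omega)
end

section
/- For n = 3: if a set X has ternary operations r and s with r(x,y,y)=x, r(x,x,y)=s(x,y,y), s(x,x,y)=y, both compatible with equivalence relations R and S on X, then R ∘ S ∘ R ≤ S ∘ R ∘ S. -/
/-! For `x R y₁ S y₂ R z` the witnesses are `u = r x y₁ y₂` and `v = s y₁ y₂ z`.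
Changing `y₂` to `y₁` in `u` (resp. `y₁` to `y₂` in `v`) stays in the `S`-class and turns it
into `r x y₁ y₁ = x` (resp. `s y₂ y₂ z = z`). Changing `x` to `y₁` and `y₂` to `z` keeps both
in their `R`-classes and meets in the middle at `r y₁ y₁ z = s y₁ z z`. -/

theorem stmt_9 {X : Type*} (r s : X → X → X → X)
    (hr1 : ∀ x y, r x y y = x)
    (hrs : ∀ x y, r x x y = s x y y)
    (hs1 : ∀ x y, s x x y = y)
    (R S : X → X → Prop) (hR : Equivalence R) (hS : Equivalence S)
    (hcompatRr : ∀ a a' b b' c c', R a a' → R b b' → R c c' → R (r a b c) (r a' b' c'))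
    (hcompatRs : ∀ a a' b b' c c', R a a' → R b b' → R c c' → R (s a b c) (s a' b' c'))
    (hcompatSr : ∀ a a' b b' c c', S a a' → S b b' → S c c' → S (r a b c) (r a' b' c'))
    (hcompatSs : ∀ a a' b b' c c', S a a' → S b b' → S c c' → S (s a b c) (s a' b' c')) :
    ∀ x z, (∃ y₁ y₂, R x y₁ ∧ S y₁ y₂ ∧ R y₂ z) →
      (∃ y₁ y₂, S x y₁ ∧ R y₁ y₂ ∧ S y₂ z) := by
  rintro x z ⟨y₁, y₂, hxy₁, hy₁y₂, hy₂z⟩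
  refine ⟨r x y₁ y₂, s y₁ y₂ z, ?_, ?_, ?_⟩
  · simpa only [hr1] using hcompatSr _ _ _ _ _ _ (hS.refl x) (hS.refl y₁) hy₁y₂
  · have hu : R (r x y₁ y₂) (r y₁ y₁ z) := hcompatRr _ _ _ _ _ _ hxy₁ (hR.refl y₁) hy₂z
    have hv : R (s y₁ z z) (s y₁ y₂ z) :=
      hcompatRs _ _ _ _ _ _ (hR.refl y₁) (hR.symm hy₂z) (hR.refl z)
    exact hR.trans (hrs y₁ z ▸ hu) hv
  · simpa only [hs1] using hcompatSs _ _ _ _ _ _ hy₁y₂ (hS.refl y₂) (hS.refl z)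
end

section
/- If a set X has ternary operations r, s with r(x,y,y)=x, r(x,x,y)=s(x,y,y), s(x,x,y)=y, and R is a reflexive binary relation on X compatible with r and s, then R^op ≤ R ∘ R, i.e., R y x implies ∃ z, R x z ∧ R z y. -/
theorem stmt_10 {X : Type*} (r s : X → X → X → X)
    (hr1 : ∀ x y, r x y y = x)
    (hrs : ∀ x y, r x x y = s x y y)
    (hs1 : ∀ x y, s x x y = y)
    (R : X → X → Prop) (hrefl : ∀ x, R x x)
    (hcompatr : ∀ a a' b b' c c', R a a' → R b b' → R c c' → R (r a b c) (r a' b' c'))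
    (hcompats : ∀ a a' b b' c c', R a a' → R b b' → R c c' → R (s a b c) (s a' b' c')) :
    ∀ x y, R y x → ∃ z, R x z ∧ R z y := by
  intro x y h
  refine ⟨r x x y, ?_, ?_⟩
  · have := hcompatr x x y x y y (hrefl x) h (hrefl y)
    rwa [hr1] at this
  · have := hcompats x x y x y y (hrefl x) h (hrefl y)
    rwa [← hrs, hs1] at this
end
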